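/- Suppose c > 0 satisfies the gap condition, z* is an optimal threshold for P, and ẑ ∈ ℝ satisfies f̂(ẑ) = P. Then no load has criticality value strictly between ẑ and z*: there is no i ∈ I with min(z*, ẑ) < C_i < max(z*, ẑ). -/

import Mathlib

/-- Ramp function `w_c`: `1` for `z ≥ 0`, `z/c + 1` for `-c ≤ z < 0`, `0` for `z < -c`. -/
noncomputable def rampW (c z : ℝ) : ℝ :=
  if 0 ≤ z then 1 else if -c ≤ z then z / c + 1 else 0

/-- The cumulative criticality function `f(z) = ∑_{i : C i ≤ z} ℓ i`. -/
noncomputable def ccf {I : Type*} [Fintype I] (ℓ C : I → ℝ) (z : ℝ) : ℝ :=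
  ∑ i ∈ Finset.univ.filter (fun i => C i ≤ z), ℓ i

/-- The Lipschitz surrogate CCF `f̂(z) = ∑_i ℓ i · w_c (z - C i)`. -/
noncomputable def sccf {I : Type*} [Fintype I] (ℓ C : I → ℝ) (c z : ℝ) : ℝ :=
  ∑ i, ℓ i * rampW c (z - C i)

/-- The gap condition on `c`: criticality values that differ, differ by at least `c`. -/
def GapCond {I : Type*} (C : I → ℝ) (c : ℝ) : Prop :=
  ∀ i j : I, C j < C i → c ≤ C i - C j

/-- `z` is an optimal threshold for `P`: `f(z) ≥ P` and `f(z') < P` for all `z' < z`. -/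
def OptThresh {I : Type*} [Fintype I] (ℓ C : I → ℝ) (P z : ℝ) : Prop :=
  P ≤ ccf ℓ C z ∧ ∀ z' < z, ccf ℓ C z' < P

lemma rampW_nonneg {c : ℝ} (hc : 0 < c) (z : ℝ) : 0 ≤ rampW c z := by
  unfold rampW
  split_ifs with h1 h2
  · norm_num
  · have : z / c + 1 = (z + c) / c := by field_simp
    rw [this]
    exact div_nonneg (by linarith) hc.le
  · norm_num

lemma rampW_le_one {c : ℝ} (hc : 0 < c) (z : ℝ) : rampW c z ≤ 1 := by
  unfold rampW
  split_ifs with h1 h2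
  · norm_num
  · have : z / c ≤ 0 := div_nonpos_of_nonpos_of_nonneg (by linarith) hc.le
    linarith
  · norm_num

lemma rampW_lt_one {c : ℝ} (hc : 0 < c) {z : ℝ} (hz : z < 0) : rampW c z < 1 := by
  unfold rampW
  rw [if_neg (by linarith)]
  split_ifs with h2
  · have : z / c < 0 := div_neg_of_neg_of_pos hz hc
    linarith
  · norm_num

lemma rampW_one {c : ℝ} {z : ℝ} (hz : 0 ≤ z) : rampW c z = 1 := by
  unfold rampW; rw [if_pos hz]

lemma rampW_zero {c : ℝ} (hc : 0 < c) {z : ℝ} (hz : z ≤ -c) : rampW c z = 0 := by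
  unfold rampW
  rw [if_neg (by linarith)]
  split_ifs with h2
  · have : z = -c := le_antisymm hz h2
    rw [this]; field_simp; norm_num
  · rfl

/-- No load has criticality value strictly between `ẑ` and `z*`. -/
theorem no_criticality_between_zhat_zstar
    {I : Type*} [Fintype I] [Nonempty I] (ℓ C : I → ℝ)
    (hℓ : ∀ i, 0 < ℓ i) (hC : ∀ i, C i ∈ Set.Icc (0 : ℝ) 1)
    (c : ℝ) (hc : 0 < c) (hgap : GapCond C c)
    (P zstar : ℝ) (hopt : OptThresh ℓ C P zstar)
    (zhat : ℝ) (hzhat : sccf ℓ C c zhat = P) :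
    ¬ ∃ i : I, min zstar zhat < C i ∧ C i < max zstar zhat := by
  classical
  rintro ⟨i, hmin, hmax⟩
  rcases le_total zstar zhat with hle | hle
  · -- zstar ≤ zhat : zstar < C i < zhat, show sccf zhat > P
    rw [min_eq_left hle] at hmin
    rw [max_eq_right hle] at hmax
    -- ccf at C i is at least ccf zstar + ℓ i
    have h1 : ccf ℓ C zstar + ℓ i ≤ ccf ℓ C (C i) := by
      unfold ccf
      have hins : (insert i (Finset.univ.filter (fun j => C j ≤ zstar)))
          ⊆ Finset.univ.filter (fun j => C j ≤ C i) := by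
        intro j hj
        simp only [Finset.mem_insert, Finset.mem_filter, Finset.mem_univ, true_and] at hj ⊢
        rcases hj with rfl | hj
        · exact le_refl _
        · linarith
      have hnotmem : i ∉ Finset.univ.filter (fun j => C j ≤ zstar) := by
        simp only [Finset.mem_filter, Finset.mem_univ, true_and]
        linarith
      calc ccf ℓ C zstar + ℓ i
          = ∑ j ∈ insert i (Finset.univ.filter (fun j => C j ≤ zstar)), ℓ j := by
            rw [Finset.sum_insert hnotmem]; unfold ccf; ring
        _ ≤ _ := Finset.sum_le_sum_of_subset_of_nonneg hins (fun j _ _ => (hℓ j).le)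
    -- sccf zhat ≥ ccf (C i)
    have h2 : ccf ℓ C (C i) ≤ sccf ℓ C c zhat := by
      unfold ccf sccf
      calc ∑ j ∈ Finset.univ.filter (fun j => C j ≤ C i), ℓ j
          = ∑ j ∈ Finset.univ.filter (fun j => C j ≤ C i), ℓ j * rampW c (zhat - C j) := by
            apply Finset.sum_congr rfl
            intro j hj
            simp only [Finset.mem_filter, Finset.mem_univ, true_and] at hj
            rw [rampW_one (by linarith)]; ring
        _ ≤ ∑ j, ℓ j * rampW c (zhat - C j) :=
            Finset.sum_le_sum_of_subset_of_nonneg (Finset.filter_subset _ _)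
              (fun j _ _ => mul_nonneg (hℓ j).le (rampW_nonneg hc _))
    have := hopt.1
    have := hℓ i
    linarith [hzhat ▸ (le_trans h1 h2)]
  · -- zhat ≤ zstar : zhat < C i < zstar, show sccf zhat < P
    rw [min_eq_right hle] at hmin
    rw [max_eq_left hle] at hmax
    set T : Finset I := Finset.univ.filter (fun j => C j < zstar) with hT
    have hiT : i ∈ T := by simp [hT, hmax]
    obtain ⟨j₀, hj₀T, hj₀max⟩ := T.exists_max_image C ⟨i, hiT⟩
    have hj₀lt : C j₀ < zstar := by
      simpa [hT] using hj₀T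
    have hj₀gt : zhat < C j₀ := lt_of_lt_of_le hmin (hj₀max i hiT)
    -- terms outside T vanish
    have hout : ∀ j ∈ Finset.univ.filter (fun j => ¬ C j < zstar),
        ℓ j * rampW c (zhat - C j) = 0 := by
      intro j hj
      simp only [Finset.mem_filter, Finset.mem_univ, true_and, not_lt] at hj
      have hji : C i < C j := lt_of_lt_of_le hmax hj
      have hgapji := hgap j i hji
      have : zhat - C j ≤ -c := by linarith
      rw [rampW_zero hc this, mul_zero]
    have hsplit : sccf ℓ C c zhat = ∑ j ∈ T, ℓ j * rampW c (zhat - C j) := by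
      unfold sccf
      rw [← Finset.sum_filter_add_sum_filter_not Finset.univ (fun j => C j < zstar)]
      rw [Finset.sum_eq_zero hout]
      simp [hT]
    have hstrict : ∑ j ∈ T, ℓ j * rampW c (zhat - C j) < ∑ j ∈ T, ℓ j := by
      apply Finset.sum_lt_sum
      · intro j hj
        nlinarith [rampW_le_one hc (zhat - C j), (hℓ j), rampW_nonneg hc (zhat - C j)]
      · refine ⟨j₀, hj₀T, ?_⟩
        have hw : rampW c (zhat - C j₀) < 1 := rampW_lt_one hc (by linarith)
        nlinarith [hℓ j₀]
    have hsub : ∑ j ∈ T, ℓ j ≤ ccf ℓ C (C j₀) := by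
      unfold ccf
      apply Finset.sum_le_sum_of_subset_of_nonneg
      · intro j hj
        simp only [hT, Finset.mem_filter, Finset.mem_univ, true_and] at hj ⊢
        exact hj₀max j (by simp [hT, hj])
      · exact fun j _ _ => (hℓ j).le
    have hlt : ccf ℓ C (C j₀) < P := hopt.2 _ hj₀lt
    linarith [hsplit ▸ hzhat]
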